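/- Let A and A' be affine point sets in general position on S² with |A| = |A'|, and let p, q ∈ A be distinct. For any p', q' ∈ A' there is at most one orientation preserving bijection f : A → A' with f(p) = p' and f(q) = q'. In particular, a symmetry of A fixing two distinct points is the identity. -/

import Mathlib

/-!
Fix distinct `p, q ∈ A`. By general position every other point of `A` lies strictly on one side
of the plane through `0, p, q`. On the side `det(p, q, x) > 0` the relation `det(p, u, v) > 0`
(the angular order of the great circles through `p`) is a strict total order: transitivity is a
three-term Grassmann–Plücker relation. An orientation preserving map fixing `p` and `q` preserves
this side and its order, and a monotone self-map of a finite strict total order is the identity.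
For two bijections `f, g : A → A'` agreeing at `p` and `q`, apply this to `g⁻¹ ∘ f`.
-/

open scoped RealInnerProductSpace

noncomputable section

abbrev E3 := EuclideanSpace ℝ (Fin 3)

/-- Determinant of the 3×3 matrix whose rows are `p`, `q`, `r`. -/
def det3 (p q r : E3) : ℝ := Matrix.det (Matrix.of ![fun i => p i, fun i => q i, fun i => r i])

/-- The orientation `sgn(p,q,r)` of a triple of points: the sign of `det3 p q r`. -/
def sgn3 (p q r : E3) : ℝ := Real.sign (det3 p q r)

/-- An affine set: a finite subset of the unit sphere contained in an open hemisphere. -/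
def IsAffineSet (A : Set E3) : Prop :=
  A.Finite ∧ A ⊆ Metric.sphere (0 : E3) 1 ∧ ∃ v : E3, ∀ p ∈ A, 0 < ⟪v, p⟫

/-- General position for an affine set: no three of its points are coplanar with the origin. -/
def GenPos (A : Set E3) : Prop :=
  ∀ p ∈ A, ∀ q ∈ A, ∀ r ∈ A, p ≠ q → p ≠ r → q ≠ r → det3 p q r ≠ 0

/-- `p` is extreme in `A`: some great circle strictly separates `p` from `A \ {p}`. -/
def IsExtremePt (p : E3) (A : Set E3) : Prop :=
  ∃ v : E3, 0 < ⟪v, p⟫ ∧ ∀ q ∈ A, q ≠ p → ⟪v, q⟫ < 0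

/-- `f` preserves orientations on `S`. -/
def OrientationPreservingOn (f : E3 → E3) (S : Set E3) : Prop :=
  ∀ p ∈ S, ∀ q ∈ S, ∀ r ∈ S, sgn3 (f p) (f q) (f r) = sgn3 p q r

open Set

section ChainsInFiniteSets

variable {α : Type*} {S : Set α} {r : α → α → Prop}

theorem Set.Finite.exists_not_rel_succ (hS : S.Finite) (hirr : ∀ x ∈ S, ¬ r x x)
    (htrans : ∀ x ∈ S, ∀ y ∈ S, ∀ z ∈ S, r x y → r y z → r x z)
    (u : ℕ → α) (hu : ∀ n, u n ∈ S) : ∃ n, ¬ r (u n) (u (n + 1)) := by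
  by_contra! hchain
  have hlt : ∀ m k, r (u m) (u (m + k + 1)) := by
    intro m k
    induction k with
    | zero => exact hchain m
    | succ k ih => exact htrans _ (hu _) _ (hu _) _ (hu _) ih (hchain _)
  obtain ⟨m, n, hmn, hum⟩ := Set.Finite.exists_lt_map_eq_of_forall_mem hu hS
  obtain ⟨k, rfl⟩ := Nat.exists_eq_add_of_lt hmn
  exact hirr _ (hu m) (hum ▸ hlt m k)

theorem Set.Finite.not_rel_apply_of_mapsTo (hS : S.Finite) (hirr : ∀ x ∈ S, ¬ r x x)
    (htrans : ∀ x ∈ S, ∀ y ∈ S, ∀ z ∈ S, r x y → r y z → r x z)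
    {f : α → α} (hf : MapsTo f S S) (hmono : ∀ x ∈ S, ∀ y ∈ S, r x y → r (f x) (f y))
    {x : α} (hx : x ∈ S) : ¬ r x (f x) := by
  intro hxfx
  have hchain : ∀ n, r (f^[n] x) (f^[n + 1] x) := by
    intro n
    induction n with
    | zero => exact hxfx
    | succ n ih =>
      rw [Function.iterate_succ_apply' f n, Function.iterate_succ_apply' f (n + 1)]
      exact hmono _ (hf.iterate n hx) _ (hf.iterate (n + 1) hx) ih
  obtain ⟨n, hn⟩ := hS.exists_not_rel_succ hirr htrans (fun n ↦ f^[n] x) (fun n ↦ hf.iterate n hx)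
  exact hn (hchain n)

theorem Set.Finite.eqOn_id_of_rel_mono (hS : S.Finite) (hirr : ∀ x ∈ S, ¬ r x x)
    (htot : ∀ x ∈ S, ∀ y ∈ S, x ≠ y → r x y ∨ r y x)
    (htrans : ∀ x ∈ S, ∀ y ∈ S, ∀ z ∈ S, r x y → r y z → r x z)
    {f : α → α} (hf : MapsTo f S S) (hmono : ∀ x ∈ S, ∀ y ∈ S, r x y → r (f x) (f y)) :
    EqOn f id S := by
  intro x hx
  by_contra hne
  rcases htot x hx (f x) (hf hx) (Ne.symm hne) with h | h
  · exact hS.not_rel_apply_of_mapsTo hirr htrans hf hmono hx h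
  · exact hS.not_rel_apply_of_mapsTo (r := flip r) hirr
      (fun x hx y hy z hz hxy hyz ↦ htrans z hz y hy x hx hyz hxy) hf
      (fun x hx y hy ↦ hmono y hy x hx) hx h

end ChainsInFiniteSets

theorem det3_apply (p q r : E3) :
    det3 p q r = p 0 * q 1 * r 2 - p 0 * q 2 * r 1 - p 1 * q 0 * r 2
      + p 1 * q 2 * r 0 + p 2 * q 0 * r 1 - p 2 * q 1 * r 0 := by
  simp [det3, Matrix.det_fin_three]

theorem det3_self_right (p q : E3) : det3 p q q = 0 := by
  rw [det3_apply]; ring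

theorem det3_self_left_right (p q : E3) : det3 p q p = 0 := by
  rw [det3_apply]; ring

theorem det3_swap_right (p q r : E3) : det3 p r q = -det3 p q r := by
  rw [det3_apply, det3_apply]; ring

theorem det3_swap_left (p q r : E3) : det3 q p r = -det3 p q r := by
  rw [det3_apply, det3_apply]; ring

theorem det3_grassmann_plucker (a b x y z : E3) :
    det3 a b x * det3 a y z - det3 a b y * det3 a x z + det3 a b z * det3 a x y = 0 := by
  simp only [det3_apply]; ring

theorem det3_pos_trans {a b u v w : E3} (hu : 0 < det3 a b u) (hv : 0 < det3 a b v)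
    (hw : 0 < det3 a b w) (huv : 0 < det3 a u v) (hvw : 0 < det3 a v w) :
    0 < det3 a u w := by
  have hrel := det3_grassmann_plucker a b u v w
  have hprod : 0 < det3 a b v * det3 a u w := by nlinarith [mul_pos hu hvw, mul_pos hw huv]
  exact pos_of_mul_pos_right hprod hv.le

theorem Real.pos_of_sign_eq_one {x : ℝ} (h : Real.sign x = 1) : 0 < x := by
  rcases lt_trichotomy x 0 with hx | rfl | hx
  · rw [Real.sign_of_neg hx] at h; norm_num at h
  · rw [Real.sign_zero] at h; norm_num at h
  · exact hx

namespace OrientationPreservingOn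

variable {f g : E3 → E3} {A B : Set E3}

theorem det3_pos (hf : OrientationPreservingOn f A) {p q r : E3} (hp : p ∈ A) (hq : q ∈ A)
    (hr : r ∈ A) (h : 0 < det3 p q r) : 0 < det3 (f p) (f q) (f r) := by
  apply Real.pos_of_sign_eq_one
  rw [← sgn3, hf p hp q hq r hr, sgn3, Real.sign_of_pos h]

theorem comp (hg : OrientationPreservingOn g B) (hf : OrientationPreservingOn f A)
    (hfAB : MapsTo f A B) : OrientationPreservingOn (g ∘ f) A :=
  fun p hp q hq r hr ↦ (hg _ (hfAB hp) _ (hfAB hq) _ (hfAB hr)).trans (hf p hp q hq r hr)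

theorem invFunOn (hg : OrientationPreservingOn g A) (hgAB : BijOn g A B) :
    OrientationPreservingOn (Function.invFunOn g A) B := by
  intro p hp q hq r hr
  have hmaps := hgAB.surjOn.mapsTo_invFunOn
  have hinv := hgAB.invOn_invFunOn.2
  rw [← hg _ (hmaps hp) _ (hmaps hq) _ (hmaps hr), hinv hp, hinv hq, hinv hr]

variable (hA : A.Finite) (hgp : GenPos A) (hf : OrientationPreservingOn f A)
  (hfA : MapsTo f A A)
include hA hgp hf hfA

theorem eqOn_id_of_det3_pos {a b : E3} (ha : a ∈ A) (hb : b ∈ A) (hfa : f a = a)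
    (hfb : f b = b) : EqOn f id {x ∈ A | 0 < det3 a b x} := by
  have hne : ∀ x ∈ {x ∈ A | 0 < det3 a b x}, x ≠ a := by
    rintro x ⟨-, hx⟩ rfl
    exact hx.ne' (det3_self_left_right x b)
  refine (hA.subset (sep_subset A _)).eqOn_id_of_rel_mono (r := fun u v ↦ 0 < det3 a u v)
    (fun x _ ↦ (det3_self_right a x).not_gt) ?_ ?_ ?_ ?_
  · intro u hu v hv huv
    rcases (hgp a ha u hu.1 v hv.1 (hne u hu).symm (hne v hv).symm huv).lt_or_gt with h | h
    · right; rw [det3_swap_right]; linarith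
    · left; exact h
  · intro u hu v hv w hw huv hvw
    exact det3_pos_trans hu.2 hv.2 hw.2 huv hvw
  · intro x hx
    refine ⟨hfA hx.1, ?_⟩
    simpa only [hfa, hfb] using hf.det3_pos ha hb hx.1 hx.2
  · intro u hu v hv huv
    simpa only [hfa] using hf.det3_pos ha hu.1 hv.1 huv

theorem eqOn_id {p q : E3} (hp : p ∈ A) (hq : q ∈ A) (hpq : p ≠ q) (hfp : f p = p)
    (hfq : f q = q) : EqOn f id A := by
  intro x hx
  by_cases hxp : x = p
  · rw [hxp, hfp, id]
  by_cases hxq : x = q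
  · rw [hxq, hfq, id]
  rcases (hgp p hp q hq x hx hpq (Ne.symm hxp) (Ne.symm hxq)).lt_or_gt with h | h
  · rw [← neg_pos, ← det3_swap_left] at h
    exact eqOn_id_of_det3_pos hA hgp hf hfA hq hp hfq hfp ⟨hx, h⟩
  · exact eqOn_id_of_det3_pos hA hgp hf hfA hp hq hfp hfq ⟨hx, h⟩

end OrientationPreservingOn

theorem OrientationPreservingOn.eqOn_of_eq_of_eq {A B : Set E3} {f g : E3 → E3}
    (hA : A.Finite) (hgp : GenPos A) (hf : OrientationPreservingOn f A) (hfAB : MapsTo f A B)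
    (hg : OrientationPreservingOn g A) (hgAB : BijOn g A B) {p q : E3} (hp : p ∈ A)
    (hq : q ∈ A) (hpq : p ≠ q) (hfgp : f p = g p) (hfgq : f q = g q) : EqOn f g A := by
  have hleft := hgAB.invOn_invFunOn.1
  have hid : EqOn (Function.invFunOn g A ∘ f) id A :=
    ((hg.invFunOn hgAB).comp hf hfAB).eqOn_id hA hgp
      (hgAB.surjOn.mapsTo_invFunOn.comp hfAB) hp hq hpq
      (by rw [Function.comp_apply, hfgp, hleft hp]) (by rw [Function.comp_apply, hfgq, hleft hq])
  intro x hx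
  rw [← hgAB.invOn_invFunOn.2 (hfAB hx), ← Function.comp_apply (f := Function.invFunOn g A),
    hid hx, id]

theorem stmt7_general (A A' : Set E3) (hA : IsAffineSet A) (hgp : GenPos A)
    (p q : E3) (hp : p ∈ A) (hq : q ∈ A) (hpq : p ≠ q) :
    (∀ p' q' : E3, p' ∈ A' → q' ∈ A' →
      ∀ f g : E3 → E3, Set.BijOn f A A' → OrientationPreservingOn f A →
        Set.BijOn g A A' → OrientationPreservingOn g A →
        f p = p' → f q = q' → g p = p' → g q = q' → Set.EqOn f g A) ∧
    (∀ f : E3 → E3, Set.BijOn f A A → OrientationPreservingOn f A →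
      f p = p → f q = q → Set.EqOn f id A) := by
  refine ⟨?_, fun f hf hfop hfp hfq ↦ hfop.eqOn_id hA.1 hgp hf.mapsTo hp hq hpq hfp hfq⟩
  rintro p' q' - - f g hf hfop hg hgop rfl rfl hgfp hgfq
  exact hfop.eqOn_of_eq_of_eq hA.1 hgp hf.mapsTo hgop hg hp hq hpq hgfp.symm hgfq.symm

/-- For affine sets `A, A'` in general position of equal size and distinct
points `p, q ∈ A`, for any `p', q' ∈ A'` there is at most one orientation preserving
bijection `f : A → A'` with `f p = p'` and `f q = q'`. In particular a symmetry of `A`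
fixing the two distinct points `p` and `q` is the identity on `A`. -/
theorem stmt7 (A A' : Set E3) (hA : IsAffineSet A) (hA' : IsAffineSet A')
    (hgp : GenPos A) (hgp' : GenPos A') (hcard : A.ncard = A'.ncard)
    (p q : E3) (hp : p ∈ A) (hq : q ∈ A) (hpq : p ≠ q) :
    (∀ p' q' : E3, p' ∈ A' → q' ∈ A' →
      ∀ f g : E3 → E3, Set.BijOn f A A' → OrientationPreservingOn f A →
        Set.BijOn g A A' → OrientationPreservingOn g A →
        f p = p' → f q = q' → g p = p' → g q = q' → Set.EqOn f g A) ∧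
    (∀ f : E3 → E3, Set.BijOn f A A → OrientationPreservingOn f A →
      f p = p → f q = q → Set.EqOn f id A) :=
  stmt7_general A A' hA hgp p q hp hq hpq
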